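/- For 1 < p < 2, there exists a constant C_p > 0 such that for all vectors x, y in ℝ^N with (x, y) ≠ (0, 0), ⟨|x|^{p-2} x - |y|^{p-2} y, x - y⟩ ≥ C_p |x - y|^2 / (|x| + |y|)^{2-p}. -/

import Mathlib

/-! With `a = ‖x‖`, `b = ‖y‖` and `t = ⟪x, y⟫`, the pairing splits as
`(a^(p-1) - b^(p-1)) (a - b) + (a^(p-2) + b^(p-2)) (a b - t)`, while
`‖x - y‖² = (a - b)² + 2 (a b - t)`. The radial term is bounded below by the tangent line of
the concave map `s ↦ s^(p-1)` at the larger of `a`, `b`; the angular term `a b - t ≥ 0` carries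
the weight `a^(p-2) + b^(p-2) ≥ 2 (a + b)^(p-2)`. Both comparisons lose only the factor
`(a + b)^(2-p)`, which gives the constant `C_p = p - 1`. -/

open scoped RealInnerProductSpace
open Real

lemma rpow_le_rpow_add_mul_rpow_sub_one_mul_sub {q a b : ℝ} (hq0 : 0 ≤ q) (hq1 : q ≤ 1)
    (ha : 0 < a) (hb : 0 ≤ b) : b ^ q ≤ a ^ q + q * a ^ (q - 1) * (b - a) := by
  have bernoulli : (1 + (b / a - 1)) ^ q ≤ 1 + q * (b / a - 1) :=
    rpow_one_add_le_one_add_mul_self (by linarith [div_nonneg hb ha.le]) hq0 hq1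
  have hpow : a ^ q = a ^ (q - 1) * a := by
    rw [← rpow_add_one ha.ne', sub_add_cancel]
  calc b ^ q = a ^ q * (1 + (b / a - 1)) ^ q := by
        rw [add_sub_cancel, div_rpow hb ha.le, mul_div_cancel₀ _ (rpow_pos_of_pos ha q).ne']
    _ ≤ a ^ q * (1 + q * (b / a - 1)) := by gcongr
    _ = a ^ q + q * a ^ (q - 1) * (b - a) := by
        rw [hpow]; field_simp

lemma one_le_rpow_neg_mul_rpow {r c s : ℝ} (hc : 0 < c) (hcs : c ≤ s) (hr : r ≤ 0) :
    1 ≤ s ^ (-r) * c ^ r := by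
  have hs : 0 < s := hc.trans_le hcs
  calc (1 : ℝ) = s ^ (-r) * s ^ r := by rw [← rpow_add hs, neg_add_cancel, rpow_zero]
    _ ≤ s ^ (-r) * c ^ r :=
        mul_le_mul_of_nonneg_left (rpow_le_rpow_of_nonpos hc hcs hr) (rpow_nonneg hs.le _)

lemma two_le_rpow_neg_mul_rpow_add_rpow {r a b : ℝ} (ha : 0 < a) (hb : 0 < b) (hr : r ≤ 0) :
    2 ≤ (a + b) ^ (-r) * (a ^ r + b ^ r) := by
  have h₁ := one_le_rpow_neg_mul_rpow ha (le_add_of_nonneg_right hb.le) hr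
  have h₂ := one_le_rpow_neg_mul_rpow hb (le_add_of_nonneg_left ha.le) hr
  linarith

lemma mul_sq_sub_le_rpow_mul_rpow_sub_rpow_mul_sub {p a b : ℝ} (hp1 : 1 ≤ p) (hp2 : p ≤ 2)
    (ha : 0 ≤ a) (hb : 0 ≤ b) :
    (p - 1) * (a - b) ^ 2 ≤ (a + b) ^ (2 - p) * ((a ^ (p - 1) - b ^ (p - 1)) * (a - b)) := by
  wlog hba : b ≤ a generalizing a b
  · have := this hb ha (by linarith)
    rw [add_comm]; convert this using 2 <;> ring
  rcases ha.eq_or_lt with rfl | ha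
  · simp [le_antisymm hba hb]
  have tangent : (p - 1) * a ^ (p - 2) * (a - b) ≤ a ^ (p - 1) - b ^ (p - 1) := by
    have := rpow_le_rpow_add_mul_rpow_sub_one_mul_sub (q := p - 1) (by linarith) (by linarith) ha hb
    rw [show p - 1 - 1 = p - 2 by ring] at this
    linarith
  have scale : 1 ≤ (a + b) ^ (2 - p) * a ^ (p - 2) := by
    simpa only [neg_sub] using
      one_le_rpow_neg_mul_rpow ha (le_add_of_nonneg_right hb) (by linarith : p - 2 ≤ 0)
  calc (p - 1) * (a - b) ^ 2 = (p - 1) * (a - b) * 1 * (a - b) := by ring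
    _ ≤ (p - 1) * (a - b) * ((a + b) ^ (2 - p) * a ^ (p - 2)) * (a - b) := by gcongr
    _ = (a + b) ^ (2 - p) * ((p - 1) * a ^ (p - 2) * (a - b)) * (a - b) := by ring
    _ ≤ (a + b) ^ (2 - p) * (a ^ (p - 1) - b ^ (p - 1)) * (a - b) := by gcongr
    _ = _ := by ring

section InnerProductSpace

variable {E : Type*} [NormedAddCommGroup E] [InnerProductSpace ℝ E]

lemma inner_rpow_smul_sub_rpow_smul (r : ℝ) (x y : E) :
    ⟪‖x‖ ^ r • x - ‖y‖ ^ r • y, x - y⟫ =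
      (‖x‖ ^ r * ‖x‖ - ‖y‖ ^ r * ‖y‖) * (‖x‖ - ‖y‖) +
        (‖x‖ ^ r + ‖y‖ ^ r) * (‖x‖ * ‖y‖ - ⟪x, y⟫) := by
  simp only [inner_sub_left, inner_sub_right, real_inner_smul_left,
    real_inner_self_eq_norm_sq, real_inner_comm x y]
  ring

lemma two_mul_sub_one_mul_norm_mul_norm_sub_inner_le {p : ℝ} (hp2 : p ≤ 2) (x y : E) :
    2 * (p - 1) * (‖x‖ * ‖y‖ - ⟪x, y⟫) ≤
      (‖x‖ + ‖y‖) ^ (2 - p) * (‖x‖ ^ (p - 2) + ‖y‖ ^ (p - 2)) * (‖x‖ * ‖y‖ - ⟪x, y⟫) := by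
  rcases eq_or_ne x 0 with rfl | hx
  · simp
  rcases eq_or_ne y 0 with rfl | hy
  · simp
  have h := two_le_rpow_neg_mul_rpow_add_rpow (norm_pos_iff.2 hx) (norm_pos_iff.2 hy)
    (by linarith : p - 2 ≤ 0)
  rw [neg_sub] at h
  exact mul_le_mul_of_nonneg_right (by linarith) (sub_nonneg.2 (real_inner_le_norm x y))

theorem mul_norm_sub_sq_div_le_inner_rpow_smul_sub {p : ℝ} (hp1 : 1 < p) (hp2 : p ≤ 2)
    (x y : E) :
    (p - 1) * ‖x - y‖ ^ 2 / (‖x‖ + ‖y‖) ^ (2 - p) ≤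
      ⟪‖x‖ ^ (p - 2) • x - ‖y‖ ^ (p - 2) • y, x - y⟫ := by
  rcases (add_nonneg (norm_nonneg x) (norm_nonneg y)).eq_or_lt with h0 | hpos
  · obtain ⟨rfl, rfl⟩ : x = 0 ∧ y = 0 := by
      constructor <;> apply norm_eq_zero.1 <;> linarith [norm_nonneg x, norm_nonneg y]
    simp
  -- At `z = 0` both sides vanish because `p - 1 ≠ 0`.
  have power (z : E) : ‖z‖ ^ (p - 2) * ‖z‖ = ‖z‖ ^ (p - 1) := by
    rw [← rpow_add_one' (norm_nonneg z) (by linarith)]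
    ring_nf
  have mono :=
    mul_sq_sub_le_rpow_mul_rpow_sub_rpow_mul_sub hp1.le hp2 (norm_nonneg x) (norm_nonneg y)
  have cross := two_mul_sub_one_mul_norm_mul_norm_sub_inner_le hp2 x y
  rw [div_le_iff₀ (rpow_pos_of_pos hpos _), inner_rpow_smul_sub_rpow_smul, power, power,
    norm_sub_sq_real]
  linear_combination mono + cross

end InnerProductSpace

/-- For `1 < p < 2` there is `C_p > 0` with
`⟪|x|^{p-2} x - |y|^{p-2} y, x - y⟫ ≥ C_p |x - y|² / (|x|+|y|)^{2-p}`
for all `(x, y) ≠ (0, 0)` in `ℝ^N`. -/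
theorem p_laplacian_monotonicity_p_lt_two (N : ℕ) (p : ℝ) (hp1 : 1 < p) (hp2 : p < 2) :
    ∃ C : ℝ, 0 < C ∧ ∀ x y : EuclideanSpace ℝ (Fin N), ¬(x = 0 ∧ y = 0) →
      C * ‖x - y‖ ^ 2 / (‖x‖ + ‖y‖) ^ (2 - p) ≤
        ⟪‖x‖ ^ (p - 2) • x - ‖y‖ ^ (p - 2) • y, x - y⟫ :=
  ⟨p - 1, sub_pos.2 hp1, fun x y _ ↦
    mul_norm_sub_sq_div_le_inner_rpow_smul_sub hp1 hp2.le x y⟩
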